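/- arXiv:2307.03599 — 4 statements merged into one kernel-verified Lean document; each statement's English description precedes it below -/
import Mathlib

section
/- For any compact set Ω ⊂ ℝ², any unit vector e ∈ ℝ², any radius r > 0, and any λ ∈ ℝ, let Ω(λ) = {x ∈ Ω : x·e ≤ λ}. Then the areas of the r-neighborhoods satisfy 𝓛²(Ωʳ \ Ω(λ)ʳ) ≥ 𝓛²(Ω \ Ω(λ)), where Eʳ denotes the open r-neighborhood {x : dist(x,E) < r}. -/
/-!
A point `x ∈ Ω` with `⟪x, e⟫ ≥ λ + δ`, `0 < δ ≤ r`, translated by `(r - δ) • e`, stays within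
`r - δ < r` of `Ω` and gains `r - δ` in height, so it is at distance `≥ r` from every point of
the half-space `{⟪·, e⟫ ≤ λ}`. Translation invariance of the measure bounds the part of `Ω` above
height `λ + δ`, and continuity from below as `δ → 0` gives the theorem. Translating by `r • e`
itself would not do: the thickenings are open, so the image might miss `thickening r Ω`.
-/

open Metric MeasureTheory Set Filter
open scoped ENNReal Topology Real RealInnerProductSpace Pointwise
noncomputable section
local notation "E2" => EuclideanSpace ℝ (Fin 2)

section

variable {E : Type*} [NormedAddCommGroup E] [InnerProductSpace ℝ E] {e : E} {S : Set E}
  {r lam : ℝ}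

theorem inner_sub_inner_le_dist (he : ‖e‖ = 1) (x y : E) : ⟪x, e⟫ - ⟪y, e⟫ ≤ dist x y := by
  rw [← inner_sub_left, dist_eq_norm]
  simpa [he] using real_inner_le_norm (x - y) e

theorem notMem_thickening_of_add_le_inner (he : ‖e‖ = 1) (hS : S ⊆ {x | ⟪x, e⟫ ≤ lam}) {y : E}
    (hy : lam + r ≤ ⟪y, e⟫) : y ∉ thickening r S := by
  rintro hy'
  obtain ⟨z, hz, hyz⟩ := mem_thickening_iff.mp hy'
  have hz' : ⟪z, e⟫ ≤ lam := hS hz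
  linarith [inner_sub_inner_le_dist he y z]

theorem vadd_subset_thickening_diff_thickening (he : ‖e‖ = 1) (hS : S ⊆ {x | ⟪x, e⟫ ≤ lam})
    (Ω : Set E) {δ : ℝ} (hδ : 0 < δ) (hδr : δ ≤ r) :
    (r - δ) • e +ᵥ {x ∈ Ω | lam + δ ≤ ⟪x, e⟫} ⊆ thickening r Ω \ thickening r S := by
  rintro _ ⟨x, ⟨hxΩ, hx⟩, rfl⟩
  dsimp only
  refine ⟨mem_thickening_iff.mpr ⟨x, hxΩ, ?_⟩, notMem_thickening_of_add_le_inner he hS ?_⟩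
  · rw [vadd_eq_add, dist_add_self_left, norm_smul, he, Real.norm_of_nonneg (by linarith)]
    linarith
  · rw [vadd_eq_add, inner_add_left, real_inner_smul_left, real_inner_self_eq_norm_sq, he]
    linarith

theorem diff_halfspace_eq_iUnion (Ω : Set E) (hr : 0 < r) :
    Ω \ {x | ⟪x, e⟫ ≤ lam} = ⋃ n : ℕ, {x ∈ Ω | lam + r / (n + 1) ≤ ⟪x, e⟫} := by
  ext x
  simp only [Set.mem_sdiff, mem_ofPred_eq, not_le, mem_iUnion]
  refine ⟨fun ⟨hxΩ, hx⟩ ↦ ?_, fun ⟨n, hxΩ, hx⟩ ↦ ⟨hxΩ, by linarith [div_pos hr n.cast_add_one_pos]⟩⟩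
  obtain ⟨n, hn⟩ := exists_nat_one_div_lt (div_pos (sub_pos.mpr hx) hr)
  refine ⟨n, hxΩ, ?_⟩
  calc lam + r / (n + 1) = lam + r * (1 / (n + 1)) := by ring
    _ ≤ lam + r * ((⟪x, e⟫ - lam) / r) := by gcongr
    _ = ⟪x, e⟫ := by field_simp; ring

theorem measure_diff_halfspace_le_measure_thickening_diff [MeasurableSpace E] [MeasurableAdd E]
    (μ : Measure E) [μ.IsAddLeftInvariant] (Ω : Set E) (he : ‖e‖ = 1) (hr : 0 < r)
    (hS : S ⊆ {x | ⟪x, e⟫ ≤ lam}) :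
    μ (Ω \ {x | ⟪x, e⟫ ≤ lam}) ≤ μ (thickening r Ω \ thickening r S) := by
  have hmono : Monotone fun n : ℕ ↦ {x ∈ Ω | lam + r / (n + 1) ≤ ⟪x, e⟫} := by
    intro m n hmn x ⟨hxΩ, hx⟩
    refine ⟨hxΩ, le_trans ?_ hx⟩
    gcongr
  rw [diff_halfspace_eq_iUnion Ω hr, hmono.measure_iUnion]
  refine iSup_le fun n ↦ ?_
  rw [← measure_vadd μ ((r - r / (n + 1)) • e)]
  exact measure_mono (vadd_subset_thickening_diff_thickening he hS Ω (div_pos hr n.cast_add_one_pos)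
    (div_le_self hr.le (le_add_of_nonneg_left n.cast_nonneg)))

end

theorem cut_neighborhood_area_general (Ω : Set E2)
    (e : E2) (he : ‖e‖ = 1) (r : ℝ) (hr : 0 < r) (lam : ℝ) :
    volume (Ω \ (Ω ∩ {x : E2 | (inner ℝ x e : ℝ) ≤ lam})) ≤
      volume (thickening r Ω \ thickening r (Ω ∩ {x : E2 | (inner ℝ x e : ℝ) ≤ lam})) := by
  rw [sdiff_self_inter]
  exact measure_diff_halfspace_le_measure_thickening_diff volume Ω he hr inter_subset_right

theorem cut_neighborhood_area (Ω : Set E2) (hΩ : IsCompact Ω)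
    (e : E2) (he : ‖e‖ = 1) (r : ℝ) (hr : 0 < r) (lam : ℝ) :
    volume (Ω \ (Ω ∩ {x : E2 | (inner ℝ x e : ℝ) ≤ lam})) ≤
      volume (thickening r Ω \ thickening r (Ω ∩ {x : E2 | (inner ℝ x e : ℝ) ≤ lam})) :=
  cut_neighborhood_area_general Ω e he r hr lam
end
end

section
/- For any point x̄ ∈ ℝ², any radius r > 0, and any finite family of points x₁,…,xₙ ∈ ℝ², the length of the part of the boundary of the union of the balls B_r(xᵢ) lying inside B_r(x̄) is at most the length of the part of ∂B_r(x̄) covered by the union: 𝓗¹(B_r(x̄) ∩ ∂⋃ᵢ B_r(xᵢ)) ≤ 𝓗¹(∂B_r(x̄) ∩ ⋃ᵢ B_r(xᵢ)) ≤ 2πr. -/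
/-!
A point of `frontier (⋃ i, ball (x i) r)` inside `ball x̄ r` lies on a circle `sphere c r` around
one of the centres and outside all the balls. The reflection in the perpendicular bisector of
`[x̄, c]` swaps `x̄` and `c`, so it carries this piece of `sphere c r` isometrically into
`sphere x̄ r ∩ ball c r`. The images coming from distinct centres are disjoint: with
`a = c - x̄`, `b = c' - x̄` and `α = ‖w - x̄‖² - ‖w - c‖² > 0`, `β = ‖w - x̄‖² - ‖w - c'‖² > 0`,
a common point `w` would give `(α + β) ‖a‖² ≤ 2 α ⟪a, b⟫` and `(α + β) ‖b‖² ≤ 2 β ⟪a, b⟫`,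
whose sum is `(α + β) ‖a - b‖² ≤ 0`. The bound `2 π r` comes from the `r`-Lipschitz
parametrisation `circleMap` of the circle.
-/

open Metric MeasureTheory Set Filter
open scoped ENNReal Topology Real RealInnerProductSpace
noncomputable section
local notation "E2" => EuclideanSpace ℝ (Fin 2)

theorem Set.Finite.frontier_biUnion_subset {X ι : Type*} [TopologicalSpace X] {s : Set ι}
    (hs : s.Finite) (f : ι → Set X) : frontier (⋃ i ∈ s, f i) ⊆ ⋃ i ∈ s, frontier (f i) := by
  rintro x ⟨hx_closure, hx_interior⟩
  rw [hs.closure_biUnion] at hx_closure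
  obtain ⟨i, hi, hx⟩ := mem_iUnion₂.mp hx_closure
  refine mem_iUnion₂.mpr ⟨i, hi, hx, fun hx' => hx_interior ?_⟩
  exact interior_mono (subset_biUnion_of_mem (u := f) hi) hx'

section BisectorReflection

variable {E : Type*} [NormedAddCommGroup E] [InnerProductSpace ℝ E]

open Submodule in
/-- The reflection in the perpendicular bisector of `[p, q]`; the identity when `p = q`. -/
def bisectorReflection (p q : E) : E ≃ᵢ E :=
  ((IsometryEquiv.subRight p).trans (reflection (ℝ ∙ (q - p))ᗮ).toIsometryEquiv).trans
    (IsometryEquiv.addLeft q)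

open Submodule in
theorem bisectorReflection_apply (p q x : E) :
    bisectorReflection p q x = q + reflection (ℝ ∙ (q - p))ᗮ (x - p) :=
  rfl

theorem bisectorReflection_apply_eq_add_smul (p q x : E) :
    bisectorReflection p q x = x - (2 * ⟪q - p, x - p⟫ / ‖q - p‖ ^ 2 - 1) • (q - p) := by
  rw [bisectorReflection_apply, Submodule.reflection_orthogonal_apply,
    Submodule.reflection_singleton_apply]
  simp only [RCLike.ofReal_real_eq_id, id]
  module

@[simp]
theorem bisectorReflection_left (p q : E) : bisectorReflection p q p = q := by
  simp [bisectorReflection_apply]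

@[simp]
theorem bisectorReflection_right (p q : E) : bisectorReflection p q q = p := by
  simp [bisectorReflection_apply, Submodule.reflection_orthogonalComplement_singleton_eq_neg]

theorem dist_bisectorReflection_left (p q x : E) :
    dist (bisectorReflection p q x) p = dist x q := by
  simpa using (bisectorReflection p q).dist_eq x q

theorem dist_bisectorReflection_right (p q x : E) :
    dist (bisectorReflection p q x) q = dist x p := by
  simpa using (bisectorReflection p q).dist_eq x p

theorem add_mul_norm_sq_le_of_le_dist_bisectorReflection {p c c' w : E}
    (h : dist w p ≤ dist (bisectorReflection p c w) c') :
    (dist w p ^ 2 - dist w c ^ 2 + (dist w p ^ 2 - dist w c' ^ 2)) * ‖c - p‖ ^ 2 ≤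
      2 * (dist w p ^ 2 - dist w c ^ 2) * ⟪c - p, c' - p⟫ := by
  rw [bisectorReflection_apply_eq_add_smul, dist_eq_norm, dist_eq_norm,
    show w - (2 * ⟪c - p, w - p⟫ / ‖c - p‖ ^ 2 - 1) • (c - p) - c' =
      w - p - (c' - p) - (2 * ⟪c - p, w - p⟫ / ‖c - p‖ ^ 2 - 1) • (c - p) by abel] at h
  rw [dist_eq_norm, dist_eq_norm, dist_eq_norm, ← sub_sub_sub_cancel_right w c p,
    ← sub_sub_sub_cancel_right w c' p]
  generalize w - p = W at *
  generalize c - p = a at *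
  generalize c' - p = b at *
  rcases eq_or_ne a 0 with rfl | ha
  · simp
  have hN : 0 < ‖a‖ ^ 2 := by positivity
  have hk : (2 * ⟪a, W⟫ / ‖a‖ ^ 2 - 1) * ‖a‖ ^ 2 = 2 * ⟪W, a⟫ - ‖a‖ ^ 2 := by
    rw [real_inner_comm a W]; field_simp
  have h2 := pow_le_pow_left₀ (norm_nonneg _) h 2
  rw [norm_sub_sq_real (W - b), norm_smul, mul_pow, Real.norm_eq_abs, sq_abs,
    inner_smul_right, inner_sub_left, norm_sub_sq_real W b] at h2
  rw [norm_sub_sq_real W a, norm_sub_sq_real W b, real_inner_comm b a]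
  generalize 2 * ⟪a, W⟫ / ‖a‖ ^ 2 - 1 = k at hk h2
  -- the goal is `‖a‖ ^ 2 • h2` once `k * ‖a‖ ^ 2` is replaced by `2 * ⟪W, a⟫ - ‖a‖ ^ 2`
  linear_combination ‖a‖ ^ 2 * h2 - (‖a‖ ^ 2 - 2 * ⟪b, a⟫ - k * ‖a‖ ^ 2) * hk

theorem eq_of_le_dist_bisectorReflection {p c c' w : E}
    (hc : dist w c < dist w p) (hc' : dist w c' < dist w p)
    (h : dist w p ≤ dist (bisectorReflection p c w) c')
    (h' : dist w p ≤ dist (bisectorReflection p c' w) c) : c = c' := by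
  have hcc' := add_mul_norm_sq_le_of_le_dist_bisectorReflection h
  have hc'c := add_mul_norm_sq_le_of_le_dist_bisectorReflection h'
  rw [real_inner_comm] at hc'c
  have hα : 0 < dist w p ^ 2 - dist w c ^ 2 := sub_pos.2 (by gcongr)
  have hβ : 0 < dist w p ^ 2 - dist w c' ^ 2 := sub_pos.2 (by gcongr)
  have key : (dist w p ^ 2 - dist w c ^ 2 + (dist w p ^ 2 - dist w c' ^ 2)) *
      ‖(c - p) - (c' - p)‖ ^ 2 ≤ 0 := by
    rw [norm_sub_sq_real]
    linarith
  have : ‖(c - p) - (c' - p)‖ ^ 2 = 0 :=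
    le_antisymm (nonpos_of_mul_nonpos_right key (by linarith)) (sq_nonneg _)
  simpa [sub_eq_zero] using this

end BisectorReflection

section HausdorffMeasure

variable {E : Type*} [NormedAddCommGroup E] [InnerProductSpace ℝ E] [MeasurableSpace E]
  [BorelSpace E]

theorem hausdorffMeasure_ball_inter_frontier_biUnion_ball_le {s : Set E} (hs : s.Finite)
    (p : E) (r d : ℝ) :
    μH[d] (ball p r ∩ frontier (⋃ c ∈ s, ball c r)) ≤
      μH[d] (sphere p r ∩ ⋃ c ∈ s, ball c r) := by
  set U := ⋃ c ∈ s, ball c r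
  have hU : IsOpen U := isOpen_biUnion fun _ _ => isOpen_ball
  set D : E → Set E := fun c => (ball p r ∩ sphere c r) \ U
  set A : E → Set E := fun c => bisectorReflection p c ⁻¹' D c
  have mem_A {c w : E} : w ∈ A c ↔
      dist w c < r ∧ dist w p = r ∧ bisectorReflection p c w ∉ U := by
    simp only [A, D, mem_preimage, Set.mem_sdiff, mem_inter_iff, mem_ball, mem_sphere,
      dist_bisectorReflection_left, dist_bisectorReflection_right, and_assoc]
  have hcover : ball p r ∩ frontier U ⊆ ⋃ c ∈ s, D c := by
    rintro z ⟨hzp, hzU⟩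
    obtain ⟨c, hc, hzc⟩ := mem_iUnion₂.mp (hs.frontier_biUnion_subset _ hzU)
    exact mem_iUnion₂.mpr ⟨c, hc, ⟨hzp, frontier_ball_subset_sphere hzc⟩,
      (disjoint_frontier_iff_isOpen.mpr hU).notMem_of_mem_left hzU⟩
  have hA_subset : ∀ c ∈ s, A c ⊆ sphere p r ∩ U := fun c hc w hw =>
    ⟨mem_sphere.mpr (mem_A.mp hw).2.1, mem_biUnion hc (mem_ball.mpr (mem_A.mp hw).1)⟩
  have hA_disjoint : s.PairwiseDisjoint A := by
    intro c hc c' hc' hne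
    refine Set.disjoint_left.mpr fun w hw hw' => hne ?_
    obtain ⟨hwc, hwp, hwU⟩ := mem_A.mp hw
    obtain ⟨hwc', -, hwU'⟩ := mem_A.mp hw'
    refine eq_of_le_dist_bisectorReflection (hwp ▸ hwc) (hwp ▸ hwc') ?_ ?_
    · exact hwp ▸ not_lt.mp fun h => hwU (mem_biUnion hc' h)
    · exact hwp ▸ not_lt.mp fun h => hwU' (mem_biUnion hc h)
  have hA_measurable : ∀ c ∈ s, MeasurableSet (A c) := fun c _ =>
    (bisectorReflection p c).continuous.measurable
      ((measurableSet_ball.inter isClosed_sphere.measurableSet).diff hU.measurableSet)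
  calc μH[d] (ball p r ∩ frontier U) ≤ μH[d] (⋃ c ∈ s, D c) := measure_mono hcover
    _ ≤ ∑' c : s, μH[d] (D c) := measure_biUnion_le _ hs.countable _
    _ = ∑' c : s, μH[d] (A c) := by
      simp only [A, IsometryEquiv.hausdorffMeasure_preimage]
    _ = μH[d] (⋃ c ∈ s, A c) := (measure_biUnion hs.countable hA_disjoint hA_measurable).symm
    _ ≤ μH[d] (sphere p r ∩ U) := measure_mono (iUnion₂_subset hA_subset)

end HausdorffMeasure

theorem Complex.hausdorffMeasure_sphere_le (c : ℂ) (r : ℝ) :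
    μH[1] (sphere c r) ≤ ENNReal.ofReal (2 * π * r) := by
  rcases lt_or_ge r 0 with hr | hr
  · simp [sphere_eq_empty_of_neg hr]
  calc μH[1] (sphere c r) = μH[1] (circleMap c r '' Ioc 0 (2 * π)) := by
        rw [image_circleMap_Ioc, abs_of_nonneg hr]
    _ ≤ Real.nnabs r ^ (1 : ℝ) * μH[1] (Ioc 0 (2 * π)) :=
        (lipschitzWith_circleMap c r).hausdorffMeasure_image_le zero_le_one _
    _ = ENNReal.ofReal (2 * π * r) := by
        rw [hausdorffMeasure_real, Real.volume_Ioc, ENNReal.rpow_one, sub_zero, mul_comm,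
          ← ENNReal.ofReal_coe_nnreal, Real.coe_nnabs, abs_of_nonneg hr,
          ← ENNReal.ofReal_mul (by positivity)]

theorem EuclideanSpace.hausdorffMeasure_sphere_le (x : E2) (r : ℝ) :
    μH[1] (sphere x r) ≤ ENNReal.ofReal (2 * π * r) := by
  let e := Complex.orthonormalBasisOneI.repr.toIsometryEquiv
  rw [← e.apply_symm_apply x, ← e.image_sphere, e.hausdorffMeasure_image]
  exact Complex.hausdorffMeasure_sphere_le _ r

theorem boundary_union_balls_bound_general (xbar : E2) (r : ℝ)
    (n : ℕ) (x : Fin n → E2) :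
    μH[1] (ball xbar r ∩ frontier (⋃ i, ball (x i) r)) ≤
      μH[1] (sphere xbar r ∩ ⋃ i, ball (x i) r) ∧
    μH[1] (sphere xbar r ∩ ⋃ i, ball (x i) r) ≤ ENNReal.ofReal (2 * π * r) := by
  rw [← biUnion_range (g := fun c => ball c r)]
  exact ⟨hausdorffMeasure_ball_inter_frontier_biUnion_ball_le (finite_range x) xbar r 1,
    (measure_mono inter_subset_left).trans (EuclideanSpace.hausdorffMeasure_sphere_le xbar r)⟩

theorem boundary_union_balls_bound (xbar : E2) (r : ℝ) (hr : 0 < r)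
    (n : ℕ) (x : Fin n → E2) :
    μH[1] (ball xbar r ∩ frontier (⋃ i, ball (x i) r)) ≤
      μH[1] (sphere xbar r ∩ ⋃ i, ball (x i) r) ∧
    μH[1] (sphere xbar r ∩ ⋃ i, ball (x i) r) ≤ ENNReal.ofReal (2 * π * r) :=
  boundary_union_balls_bound_general xbar r n x
end
end

section
/- Let Ω₀ ⊂ ℝ² be a compact convex set with positive area, let r > 0, and let 0 < a ≤ 𝓛²(Ω₀). Then there exists a closed set Ω ⊆ Ω₀ with 𝓛²(Ω) = a minimizing 𝓛²(Ωʳ) among all closed subsets of Ω₀ of area a. -/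
/-!
The functional `K ↦ 𝓛²(Kʳ)` is lower semicontinuous and `K ↦ 𝓛²(K)` is upper semicontinuous
for the Hausdorff metric on nonempty compact sets. Hence the nonempty compact subsets of `Ω₀` of
area at least `a` form a compact family (Blaschke selection), on which `𝓛²(Kʳ)` attains its
minimum at some `K`. Cutting `K` by a ball `closedBall 0 s`, whose area varies continuously in `s`,
yields a closed `Ω ⊆ K` of area exactly `a`; it is no worse than `K`, and every admissible `Ω'`
belongs to the family, so `Ω` is a minimizer.
-/

open Metric MeasureTheory Set Filter
open scoped ENNReal Topology Real RealInnerProductSpace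
noncomputable section
local notation "E2" => EuclideanSpace ℝ (Fin 2)

open TopologicalSpace

section Hausdorff

variable {X : Type*}

theorem Metric.subset_thickening_of_hausdorffEDist_lt [PseudoEMetricSpace X] {s t : Set X}
    {δ : ℝ} (h : hausdorffEDist s t < ENNReal.ofReal δ) : s ⊆ thickening δ t :=
  fun _ hx => mem_thickening_iff_infEDist_lt.2 ((infEDist_le_hausdorffEDist_of_mem hx).trans_lt h)

theorem Metric.thickening_sub_subset_of_hausdorffEDist_lt [PseudoEMetricSpace X] {s t : Set X}
    {δ : ℝ} (h : hausdorffEDist s t < ENNReal.ofReal δ) (r : ℝ) :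
    thickening (r - δ) s ⊆ thickening r t :=
  calc thickening (r - δ) s ⊆ thickening (r - δ) (thickening δ t) :=
        thickening_subset_of_subset _ (subset_thickening_of_hausdorffEDist_lt h)
    _ ⊆ thickening (r - δ + δ) t := thickening_thickening_subset _ _ _
    _ = thickening r t := by rw [sub_add_cancel]

theorem Metric.iUnion_thickening_sub_one_div [PseudoMetricSpace X] (s : Set X) (r : ℝ) :
    ⋃ n : ℕ, thickening (r - 1 / (n + 1)) s = thickening r s := by
  refine Subset.antisymm
    (iUnion_subset fun n => thickening_mono (sub_le_self r Nat.one_div_pos_of_nat.le) s) ?_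
  intro x hx
  obtain ⟨z, hz, hxz⟩ := mem_thickening_iff.1 hx
  obtain ⟨n, hn⟩ := exists_nat_one_div_lt (sub_pos.2 hxz)
  exact mem_iUnion.2 ⟨n, mem_thickening_iff.2 ⟨z, hz, by linarith⟩⟩

variable [MetricSpace X] [MeasurableSpace X] (μ : Measure X)

theorem lowerSemicontinuous_measure_thickening (r : ℝ) :
    LowerSemicontinuous fun K : NonemptyCompacts X => μ (thickening r K) := by
  intro K y (hy : y < μ (thickening r K))
  have hmono : Monotone fun n : ℕ => thickening (r - 1 / (n + 1)) (K : Set X) :=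
    fun m n hmn => thickening_mono (by gcongr) _
  rw [← iUnion_thickening_sub_one_div] at hy
  obtain ⟨n, hn⟩ := ((tendsto_measure_iUnion_atTop hmono).eventually (lt_mem_nhds hy)).exists
  have hδ : (0 : ℝ) < 1 / (n + 1) := Nat.one_div_pos_of_nat
  filter_upwards [eball_mem_nhds K (ENNReal.ofReal_pos.2 hδ)] with K' hK'
  rw [mem_eball, edist_comm] at hK'
  exact hn.trans_le (measure_mono (thickening_sub_subset_of_hausdorffEDist_lt hK' r))

theorem upperSemicontinuous_measure_coe [ProperSpace X] [OpensMeasurableSpace X]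
    [IsFiniteMeasureOnCompacts μ] :
    UpperSemicontinuous fun K : NonemptyCompacts X => μ K := by
  intro K y (hy : μ K < y)
  have hy_near : ∀ᶠ δ in 𝓝[>] (0 : ℝ), μ (cthickening δ K) < y :=
    ((tendsto_measure_cthickening_of_isCompact K.isCompact).eventually (gt_mem_nhds hy)).filter_mono
      nhdsWithin_le_nhds
  obtain ⟨δ, hδy, hδ⟩ := (hy_near.and self_mem_nhdsWithin).exists
  filter_upwards [eball_mem_nhds K (ENNReal.ofReal_pos.2 hδ)] with K' hK'
  exact (measure_mono ((subset_thickening_of_hausdorffEDist_lt hK').trans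
    (thickening_subset_cthickening _ _))).trans_lt hδy

end Hausdorff

theorem ENNReal.continuousOn_of_le_add_tsub {f c : ℝ → ℝ≥0∞} {I : Set ℝ}
    (hc : ContinuousOn c I) (hc_top : ∀ s, c s ≠ ∞) (hf_top : ∀ s, f s ≠ ∞) (hf : Monotone f)
    (hfc : ∀ ⦃u v⦄, u ≤ v → f v ≤ f u + (c v - c u)) : ContinuousOn f I := by
  intro s₀ hs₀
  rw [ContinuousWithinAt, ENNReal.tendsto_nhds (hf_top s₀)]
  intro ε hε
  filter_upwards [(ENNReal.tendsto_nhds (hc_top s₀)).1 (hc s₀ hs₀) ε hε] with s ⟨hcs, hcs'⟩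
  rcases le_total s s₀ with h | h
  · refine ⟨tsub_le_iff_right.2 ((hfc h).trans ?_), (hf h).trans le_self_add⟩
    gcongr
    exact tsub_le_iff_right.2 (by rwa [add_comm, ← tsub_le_iff_right])
  · exact ⟨tsub_le_self.trans (hf h), (hfc h).trans (by gcongr; exact tsub_le_iff_left.2 hcs')⟩

section ProperSpace

variable {X : Type*} [PseudoMetricSpace X] [ProperSpace X] [MeasurableSpace X]
  [OpensMeasurableSpace X] (μ : Measure X) [IsFiniteMeasureOnCompacts μ]

theorem measure_inter_closedBall_le_add_tsub (S : Set X) (x : X) {u v : ℝ} (huv : u ≤ v) :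
    μ (S ∩ closedBall x v) ≤
      μ (S ∩ closedBall x u) + (μ (closedBall x v) - μ (closedBall x u)) :=
  calc μ (S ∩ closedBall x v)
      ≤ μ ((S ∩ closedBall x u) ∪ (closedBall x v \ closedBall x u)) := by
        refine measure_mono fun y hy => ?_
        by_cases hyu : y ∈ closedBall x u
        exacts [Or.inl ⟨hy.1, hyu⟩, Or.inr ⟨hy.2, hyu⟩]
    _ ≤ μ (S ∩ closedBall x u) + μ (closedBall x v \ closedBall x u) := measure_union_le _ _
    _ = μ (S ∩ closedBall x u) + (μ (closedBall x v) - μ (closedBall x u)) := by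
        rw [measure_sdiff (closedBall_subset_closedBall huv)
          measurableSet_closedBall.nullMeasurableSet measure_closedBall_lt_top.ne]

end ProperSpace

section AddHaar

variable {E : Type*} [NormedAddCommGroup E] [NormedSpace ℝ E] [FiniteDimensional ℝ E]
  [MeasurableSpace E] [BorelSpace E] (μ : Measure E) [μ.IsAddHaarMeasure]

theorem continuousOn_measure_closedBall (x : E) :
    ContinuousOn (fun s => μ (closedBall x s)) (Ici 0) := by
  have : Continuous fun s : ℝ => ENNReal.ofReal (s ^ Module.finrank ℝ E) * μ (ball 0 1) :=
    (ENNReal.continuous_mul_const measure_ball_lt_top.ne).comp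
      (ENNReal.continuous_ofReal.comp (continuous_pow _))
  exact this.continuousOn.congr fun s hs => Measure.addHaar_closedBall μ x hs

theorem continuousOn_measure_inter_closedBall (S : Set E) (x : E) :
    ContinuousOn (fun s => μ (S ∩ closedBall x s)) (Ici 0) :=
  ENNReal.continuousOn_of_le_add_tsub (continuousOn_measure_closedBall μ x)
    (fun _ => measure_closedBall_lt_top.ne)
    (fun _ => (measure_mono inter_subset_right).trans_lt measure_closedBall_lt_top |>.ne)
    (fun _ _ h => measure_mono (inter_subset_inter_right _ (closedBall_subset_closedBall h)))
    (fun _ _ => measure_inter_closedBall_le_add_tsub μ S x)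

theorem IsCompact.exists_isClosed_subset_measure_eq [Nontrivial E] {K : Set E} (hK : IsCompact K)
    {a : ℝ≥0∞} (ha : a ≤ μ K) : ∃ Ω, IsClosed Ω ∧ Ω ⊆ K ∧ μ Ω = a := by
  obtain ⟨R, hR, hKR⟩ := hK.isBounded.subset_closedBall_lt 0 0
  have hmem : a ∈ Icc (μ (K ∩ closedBall 0 0)) (μ (K ∩ closedBall 0 R)) := by
    refine ⟨?_, by rwa [inter_eq_self_of_subset_left hKR]⟩
    rw [closedBall_zero, measure_mono_null inter_subset_right (measure_singleton 0)]
    exact zero_le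
  obtain ⟨s, -, hs⟩ := intermediate_value_Icc hR.le
    ((continuousOn_measure_inter_closedBall μ K 0).mono Icc_subset_Ici_self) hmem
  exact ⟨K ∩ closedBall 0 s, hK.isClosed.inter isClosed_closedBall, inter_subset_left, hs⟩

end AddHaar

theorem exists_minimizer_one_step_general (Ω₀ : Set E2) (h0 : IsCompact Ω₀) (r : ℝ)
    (a : ℝ≥0∞) (ha : 0 < a) (ha2 : a ≤ volume Ω₀) :
    ∃ Ω : Set E2, IsClosed Ω ∧ Ω ⊆ Ω₀ ∧ volume Ω = a ∧
      ∀ Ω' : Set E2, IsClosed Ω' → Ω' ⊆ Ω₀ → volume Ω' = a →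
        volume (thickening r Ω) ≤ volume (thickening r Ω') := by
  set S : Set (NonemptyCompacts E2) := {K | (K : Set E2) ⊆ Ω₀ ∧ a ≤ volume (K : Set E2)}
  have hS_ne : S.Nonempty :=
    ⟨⟨⟨Ω₀, h0⟩, nonempty_of_measure_ne_zero (ha.trans_le ha2).ne'⟩, subset_rfl, ha2⟩
  have hS : IsCompact S := (NonemptyCompacts.isCompact_subsets_of_isCompact h0).inter_right
    (upperSemicontinuous_iff_isClosed_preimage.1 (upperSemicontinuous_measure_coe volume) a)
  obtain ⟨K, ⟨hKΩ₀, haK⟩, hK_min⟩ := LowerSemicontinuousOn.exists_isMinOn hS_ne hS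
    ((lowerSemicontinuous_measure_thickening volume r).lowerSemicontinuousOn S)
  obtain ⟨Ω, hΩ, hΩK, hΩa⟩ := K.isCompact.exists_isClosed_subset_measure_eq volume haK
  refine ⟨Ω, hΩ, hΩK.trans hKΩ₀, hΩa, fun Ω' hΩ' hΩ'Ω₀ hΩ'a => ?_⟩
  let K' : NonemptyCompacts E2 :=
    ⟨⟨Ω', h0.of_isClosed_subset hΩ' hΩ'Ω₀⟩, nonempty_of_measure_ne_zero (hΩ'a.trans_ne ha.ne')⟩
  calc volume (thickening r Ω) ≤ volume (thickening r K) :=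
        measure_mono (thickening_subset_of_subset r hΩK)
    _ ≤ volume (thickening r Ω') := by exact isMinOn_iff.1 hK_min K' ⟨hΩ'Ω₀, hΩ'a.ge⟩

theorem exists_minimizer_one_step (Ω₀ : Set E2) (h0 : IsCompact Ω₀) (hc : Convex ℝ Ω₀)
    (hpos : 0 < volume Ω₀) (r : ℝ) (hr : 0 < r)
    (a : ℝ≥0∞) (ha : 0 < a) (ha2 : a ≤ volume Ω₀) :
    ∃ Ω : Set E2, IsClosed Ω ∧ Ω ⊆ Ω₀ ∧ volume Ω = a ∧
      ∀ Ω' : Set E2, IsClosed Ω' → Ω' ⊆ Ω₀ → volume Ω' = a →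
        volume (thickening r Ω) ≤ volume (thickening r Ω') :=
  exists_minimizer_one_step_general Ω₀ h0 r a ha ha2
end
end

section
/- Let Ω₀ ⊂ ℝ² be a compact convex set, r > 0, and ρ ∈ (0, R̄] where R̄ is the inner radius of Ω₀. Then the r-neighborhood of the inner ρ-hull equals the inner (ρ+r)-hull of the r-neighborhood: Ω̂(Ω₀ʳ, ρ + r) = (Ω̂(Ω₀, ρ))ʳ, where Ω̂(Ω,ρ) = ⋃{B_ρ(x) : B_ρ(x) ⊆ Ω} and Eʳ = {x : dist(x,E) < r}. -/
open Metric MeasureTheory Set Filter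
open scoped ENNReal Topology Real RealInnerProductSpace
noncomputable section
local notation "E2" => EuclideanSpace ℝ (Fin 2)

/-- The inner ρ-hull of a set: union of all open balls of radius ρ contained in it. -/
def innerHull (Ω₀ : Set E2) (ρ : ℝ) : Set E2 := ⋃ x ∈ {x : E2 | ball x ρ ⊆ Ω₀}, ball x ρ

lemma cancel_ball (Ω₀ : Set E2) (h0 : IsClosed Ω₀) (hc : Convex ℝ Ω₀) (x : E2)
    (ρ r : ℝ) (hρ : 0 < ρ) (hr : 0 < r)
    (h : ball x (ρ + r) ⊆ thickening r Ω₀) : ball x ρ ⊆ Ω₀ := by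
  intro a ha
  by_contra hna
  obtain ⟨f, u, hfu, hua⟩ := geometric_hahn_banach_closed_point hc h0 hna
  -- Ω₀ nonempty
  have hx : x ∈ thickening r Ω₀ := h (mem_ball_self (by linarith))
  obtain ⟨b, hb, -⟩ := mem_thickening_iff.mp hx
  have hfne : f ≠ 0 := by
    intro h0f
    have := hfu b hb
    simp [h0f] at this hua
    linarith
  set v : E2 := (InnerProductSpace.toDual ℝ E2).symm f with hv
  have hfv : ∀ z, f z = ⟪v, z⟫ := fun z => by
    simp [hv, InnerProductSpace.toDual_symm_apply, real_inner_comm]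
  have hnv : ‖v‖ = ‖f‖ := by simp [hv]
  have hvpos : 0 < ‖v‖ := by
    rw [hnv]; exact norm_pos_iff.mpr hfne
  set δ : ℝ := f a - u with hδ
  have hδpos : 0 < δ := by simp [hδ]; linarith
  set ε : ℝ := min (r/2) (δ/(2*‖v‖)) with hε
  have hεpos : 0 < ε := lt_min (by linarith) (by positivity)
  have hεr : ε < r := lt_of_le_of_lt (min_le_left _ _) (by linarith)
  set s : ℝ := r - ε with hs
  have hspos : 0 < s := by simp [hs]; linarith
  set w : E2 := ‖v‖⁻¹ • v with hw
  have hfw : f w = ‖v‖ := by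
    rw [hfv, hw, real_inner_smul_right, real_inner_self_eq_norm_sq]
    field_simp
  have hnw : ‖w‖ = 1 := by
    rw [hw, norm_smul, norm_inv, norm_norm]
    field_simp
  set p : E2 := a + s • w with hp
  have hpx : p ∈ ball x (ρ + r) := by
    have : dist p x ≤ dist p a + dist a x := dist_triangle _ _ _
    have hpa : dist p a = s := by
      rw [hp, dist_eq_norm]
      simp [norm_smul, hnw, abs_of_pos hspos]
    rw [mem_ball]
    rw [mem_ball] at ha
    have : dist p x ≤ s + dist a x := by rw [← hpa]; exact dist_triangle _ _ _
    have hsr : s < r := by simp [hs]; linarith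
    linarith
  obtain ⟨c, hcΩ, hpc⟩ := mem_thickening_iff.mp (h hpx)
  have h1 : f p ≤ f c + ‖f‖ * dist p c := by
    have := f.le_opNorm (p - c)
    have h2 : f p - f c ≤ ‖f‖ * ‖p - c‖ := by
      calc f p - f c = f (p - c) := by rw [map_sub]
        _ ≤ ‖f (p - c)‖ := le_abs_self _
        _ ≤ ‖f‖ * ‖p - c‖ := f.le_opNorm _
    rw [dist_eq_norm]; linarith
  have h2 : f p < u + ‖v‖ * r := by
    have := hfu c hcΩ
    have hfc : ‖f‖ * dist p c ≤ ‖v‖ * r := by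
      rw [← hnv]
      exact mul_le_mul_of_nonneg_left (le_of_lt hpc) (le_of_lt hvpos) |>.trans
        (le_of_eq rfl)
    nlinarith [dist_nonneg (x := p) (y := c)]
  have h3 : f p = f a + s * ‖v‖ := by
    rw [hp, map_add, f.map_smul, hfw, smul_eq_mul]
  -- contradiction: f a + s‖v‖ = u + δ + (r-ε)‖v‖ ≥ u + r‖v‖ + δ/2 > u + r‖v‖
  have hεv : ε * ‖v‖ ≤ δ / 2 := by
    have h4 : ε ≤ δ/(2*‖v‖) := min_le_right _ _
    calc ε * ‖v‖ ≤ δ/(2*‖v‖) * ‖v‖ := mul_le_mul_of_nonneg_right h4 hvpos.le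
      _ = δ/2 := by field_simp
  have : f a + s * ‖v‖ = u + r * ‖v‖ + (δ - ε * ‖v‖) := by
    rw [hs]; simp [hδ]; ring
  nlinarith

theorem innerHull_thickening (Ω₀ : Set E2) (h0 : IsCompact Ω₀) (hc : Convex ℝ Ω₀)
    (Rbar : ℝ) (hR : Rbar = sSup {ρ : ℝ | ∃ x : E2, ball x ρ ⊆ Ω₀})
    (ρ r : ℝ) (hρ : 0 < ρ) (hρR : ρ ≤ Rbar) (hr : 0 < r) :
    innerHull (thickening r Ω₀) (ρ + r) = thickening r (innerHull Ω₀ ρ) := by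
  have key : {x : E2 | ball x (ρ + r) ⊆ thickening r Ω₀} = {x : E2 | ball x ρ ⊆ Ω₀} := by
    ext y
    constructor
    · exact cancel_ball Ω₀ h0.isClosed hc y ρ r hρ hr
    · intro hy
      show ball y (ρ + r) ⊆ thickening r Ω₀
      rw [add_comm, ← thickening_ball hr hρ y]
      intro z hz
      obtain ⟨w, hw, hwz⟩ := mem_thickening_iff.mp hz
      exact mem_thickening_iff.mpr ⟨w, hy hw, hwz⟩
  have dist_union : thickening r (innerHull Ω₀ ρ)
      = ⋃ x ∈ {x : E2 | ball x ρ ⊆ Ω₀}, thickening r (ball x ρ) := by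
    rw [innerHull]
    exact thickening_biUnion r _ _
  rw [innerHull, key, dist_union]
  apply iUnion_congr fun x => iUnion_congr fun hx => ?_
  rw [thickening_ball hr hρ, add_comm]
end
end
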